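/- A positive odd integer a = ∏_{p prime} p^{α_p} is the order of some element of the alternating group A_n if and only if the sum over primes p dividing a of p^{α_p} is at most n. For even a, a is the order of some element of A_n if and only if 2 + ∑_{p | a} p^{α_p} ≤ n. -/

import Mathlib

/-!
Write `F m = ∑_{p ∣ m} p ^ {v_p(m)}` (`primePowerSum m`). An element of `A_n` of order `a` is an
even permutation whose cycle lengths `c` satisfy `lcm c = a` and `∑ c ≤ n`. Since `F` is monotone
under divisibility, subadditive on `lcm` and satisfies `F m ≤ m`, any such `c` has `F a ≤ ∑ c`.
Evenness means an even number of cycles of even length; if `a` is even there is at least one,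
hence two, and merging the `2`-parts of two even cycles saves at least `2`, giving
`2 + F a ≤ ∑ c`. Conversely, one cycle of length `p ^ v_p(a)` per prime (plus a transposition
when `a` is even) is an even permutation of order `a` moving `F a` (resp. `2 + F a`) points.
-/

theorem Finset.sum_le_prod_of_two_le {ι : Type*} {s : Finset ι} {f : ι → ℕ}
    (hf : ∀ i ∈ s, 2 ≤ f i) : ∑ i ∈ s, f i ≤ ∏ i ∈ s, f i := by
  induction s using Finset.cons_induction with
  | empty => simp
  | cons a s _ ih =>
    rw [Finset.sum_cons, Finset.prod_cons]
    have hfs : ∀ i ∈ s, 2 ≤ f i := fun i hi => hf i (Finset.mem_cons_of_mem hi)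
    obtain rfl | ⟨i, hi⟩ := s.eq_empty_or_nonempty
    · simp
    have h2 : 2 ≤ ∑ i ∈ s, f i := (hfs i hi).trans (Finset.single_le_sum (by simp) hi)
    calc f a + ∑ i ∈ s, f i ≤ f a + ∏ i ∈ s, f i := by gcongr; exact ih hfs
      _ ≤ f a * ∏ i ∈ s, f i := add_le_mul (hf a (Finset.mem_cons_self a s)) (h2.trans (ih hfs))

theorem Multiset.exists_eq_cons_cons_of_two_le_card_filter {α : Type*} {p : α → Prop}
    [DecidablePred p] {s : Multiset α} (h : 2 ≤ card (s.filter p)) :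
    ∃ x y t, p x ∧ p y ∧ s = x ::ₘ y ::ₘ t := by
  obtain ⟨x, hx⟩ := card_pos_iff_exists_mem.1 (by omega : 0 < card (s.filter p))
  obtain ⟨hxs, hpx⟩ := mem_filter.1 hx
  obtain ⟨s', rfl⟩ := exists_cons_of_mem hxs
  rw [filter_cons_of_pos _ hpx, card_cons] at h
  obtain ⟨y, hy⟩ := card_pos_iff_exists_mem.1 (by omega : 0 < card (s'.filter p))
  obtain ⟨hys, hpy⟩ := mem_filter.1 hy
  obtain ⟨t, rfl⟩ := exists_cons_of_mem hys
  exact ⟨x, y, t, hpx, hpy, rfl⟩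

theorem Multiset.prod_map_neg_neg_one_pow (c : Multiset ℕ) :
    (c.map fun n => -(-1 : ℤˣ) ^ n).prod = (-1) ^ card (c.filter Even) := by
  induction c using Multiset.induction_on with
  | empty => simp
  | cons x c ih =>
    rw [map_cons, prod_cons, ih, filter_cons]
    by_cases hx : Even x
    · simp [hx, hx.neg_one_pow, pow_succ']
    · simp [hx, (Nat.not_even_iff_odd.1 hx).neg_one_pow]

theorem Equiv.Perm.sign_eq_one_iff_even_card_filter_even {α : Type*} [Fintype α] [DecidableEq α]
    (σ : Perm α) : sign σ = 1 ↔ Even (Multiset.card (σ.cycleType.filter Even)) := by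
  rw [sign_of_cycleType', Multiset.prod_map_neg_neg_one_pow,
    neg_one_pow_eq_one_iff_even (by decide)]

theorem exists_orderOf_alternatingGroup_iff (α : Type*) [Fintype α] [DecidableEq α] (a : ℕ) :
    (∃ g : alternatingGroup α, orderOf g = a) ↔
      ∃ c : Multiset ℕ, (∀ x ∈ c, 2 ≤ x) ∧ c.sum ≤ Fintype.card α ∧
        Even (Multiset.card (c.filter Even)) ∧ c.lcm = a := by
  constructor
  · rintro ⟨⟨σ, hσ⟩, rfl⟩
    refine ⟨σ.cycleType, fun x => Equiv.Perm.two_le_of_mem_cycleType, σ.sum_cycleType_le,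
      σ.sign_eq_one_iff_even_card_filter_even.1 (Equiv.Perm.mem_alternatingGroup.1 hσ), ?_⟩
    rw [Equiv.Perm.lcm_cycleType, Subgroup.orderOf_mk]
  · rintro ⟨c, hc2, hcn, hceven, rfl⟩
    obtain ⟨σ, rfl⟩ := (Equiv.Perm.exists_with_cycleType_iff α).2 ⟨hcn, hc2⟩
    refine ⟨⟨σ, Equiv.Perm.mem_alternatingGroup.2
      (σ.sign_eq_one_iff_even_card_filter_even.2 hceven)⟩, ?_⟩
    rw [Subgroup.orderOf_mk, Equiv.Perm.lcm_cycleType]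

def primePowerSum (m : ℕ) : ℕ := ∑ p ∈ m.primeFactors, p ^ m.factorization p

@[simp]
theorem primePowerSum_one : primePowerSum 1 = 0 := by
  simp [primePowerSum]

theorem primePowerSum_le_self {m : ℕ} (hm : m ≠ 0) : primePowerSum m ≤ m := by
  conv_rhs => rw [Nat.prod_primeFactors_pow_factorization hm]
  exact Finset.sum_le_prod_of_two_le fun p hp => (Nat.prime_of_mem_primeFactors hp).two_le.trans
    (Nat.le_self_pow (Finsupp.mem_support_iff.1 hp) p)

theorem primePowerSum_mono {m m' : ℕ} (h : m ∣ m') (hm' : m' ≠ 0) :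
    primePowerSum m ≤ primePowerSum m' := by
  have hm : m ≠ 0 := ne_zero_of_dvd_ne_zero hm' h
  calc primePowerSum m ≤ ∑ p ∈ m.primeFactors, p ^ m'.factorization p :=
        Finset.sum_le_sum fun p hp => Nat.pow_le_pow_right (Nat.prime_of_mem_primeFactors hp).pos
          ((Nat.factorization_le_iff_dvd hm hm').2 h p)
    _ ≤ primePowerSum m' := Finset.sum_le_sum_of_subset (Nat.primeFactors_mono h hm')

theorem primePowerSum_lcm_le {x y : ℕ} (hx : x ≠ 0) (hy : y ≠ 0) :
    primePowerSum (x.lcm y) ≤ primePowerSum x + primePowerSum y := by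
  classical
  simp only [primePowerSum, ← Nat.support_factorization, Nat.factorization_lcm hx hy,
    Finsupp.support_sup, Finsupp.sup_apply]
  -- split the primes of `lcm x y` according to which of `x`, `y` carries the larger power
  rw [← Finset.sum_filter_add_sum_filter_not _ (fun p => y.factorization p ≤ x.factorization p)]
  gcongr ?_ + ?_ <;>
  refine (Finset.sum_congr rfl fun p hp => ?_).trans_le
    (Finset.sum_le_sum_of_subset fun p hp => ?_) <;>
  simp only [Finset.mem_filter, Finset.mem_union, Finsupp.mem_support_iff] at hp ⊢
  · rw [max_eq_left hp.2]
  · omega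
  · rw [max_eq_right (not_le.1 hp.2).le]
  · omega

theorem primePowerSum_lcm_add_two_le_of_dvd {x y : ℕ} (hx : x ≠ 0) (hy : Even y) (hy0 : y ≠ 0)
    (h : 2 ^ y.factorization 2 ∣ x) : primePowerSum (x.lcm y) + 2 ≤ x + y := by
  set u := y / 2 ^ y.factorization 2
  have hyu : 2 ^ y.factorization 2 * u = y := Nat.ordProj_mul_ordCompl_eq_self y 2
  have hu : u ≠ 0 := by rintro hu; rw [hu, mul_zero] at hyu; exact hy0 hyu.symm
  have hk : y.factorization 2 ≠ 0 :=
    (Nat.prime_two.factorization_pos_of_dvd hy0 hy.two_dvd).ne'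
  -- the `2`-part of `y` already divides `x`, so `y` may be replaced by its odd part `u`
  have hdvd : x.lcm y ∣ x.lcm u := by
    refine Nat.lcm_dvd (Nat.dvd_lcm_left x u) ?_
    rw [← hyu]
    exact ((Nat.coprime_ordCompl Nat.prime_two hy0).pow_left _).mul_dvd_of_dvd_of_dvd
      (h.trans (Nat.dvd_lcm_left x u)) (Nat.dvd_lcm_right x u)
  have hu_le : primePowerSum u + 2 ≤ y := by
    have h2u : 2 * u ≤ y := hyu ▸ Nat.mul_le_mul_right u (Nat.le_self_pow hk 2)
    by_cases hu1 : u = 1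
    · rw [hu1, primePowerSum_one]; omega
    · have := primePowerSum_le_self hu; omega
  calc primePowerSum (x.lcm y) + 2 ≤ primePowerSum (x.lcm u) + 2 := by
        gcongr; exact primePowerSum_mono hdvd (Nat.lcm_ne_zero hx hu)
    _ ≤ primePowerSum x + primePowerSum u + 2 := by gcongr; exact primePowerSum_lcm_le hx hu
    _ ≤ x + y := by have := primePowerSum_le_self hx; omega

theorem primePowerSum_lcm_add_two_le {x y : ℕ} (hx : Even x) (hy : Even y) (hx0 : x ≠ 0)
    (hy0 : y ≠ 0) : primePowerSum (x.lcm y) + 2 ≤ x + y := by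
  rcases le_total (y.factorization 2) (x.factorization 2) with h | h
  · exact primePowerSum_lcm_add_two_le_of_dvd hx0 hy hy0
      ((pow_dvd_pow 2 h).trans (Nat.ordProj_dvd x 2))
  · rw [Nat.lcm_comm, add_comm x]
    exact primePowerSum_lcm_add_two_le_of_dvd hy0 hx hx0
      ((pow_dvd_pow 2 h).trans (Nat.ordProj_dvd y 2))

theorem primePowerSum_lcm_le_sum {c : Multiset ℕ} (hc : 0 ∉ c) :
    primePowerSum c.lcm ≤ c.sum := by
  induction c using Multiset.induction_on with
  | empty => simp
  | cons x c ih =>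
    obtain ⟨hx, hc⟩ : x ≠ 0 ∧ 0 ∉ c := by simpa [eq_comm] using hc
    rw [Multiset.lcm_cons, Multiset.sum_cons, lcm_eq_nat_lcm]
    calc primePowerSum (x.lcm c.lcm) ≤ primePowerSum x + primePowerSum c.lcm :=
          primePowerSum_lcm_le hx (mt (Multiset.lcm_eq_zero_iff c).1 hc)
      _ ≤ x + c.sum := add_le_add (primePowerSum_le_self hx) (ih hc)

theorem two_add_primePowerSum_lcm_le_sum {c : Multiset ℕ} (hc : 0 ∉ c)
    (hlcm : Even c.lcm) (heven : Even (Multiset.card (c.filter Even))) :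
    2 + primePowerSum c.lcm ≤ c.sum := by
  have hpos : 0 < Multiset.card (c.filter Even) := by
    obtain ⟨x, hx, h2x⟩ := Nat.prime_two.prime.exists_mem_multiset_dvd
      (hlcm.two_dvd.trans (Multiset.lcm_dvd.2 fun _ => Multiset.dvd_prod))
    exact Multiset.card_pos_iff_exists_mem.2
      ⟨x, Multiset.mem_filter.2 ⟨hx, even_iff_two_dvd.2 h2x⟩⟩
  obtain ⟨x, y, t, hx, hy, rfl⟩ := Multiset.exists_eq_cons_cons_of_two_le_card_filter
    (s := c) (p := Even) (by obtain ⟨k, hk⟩ := heven; omega)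
  obtain ⟨hx0, hy0, ht⟩ : x ≠ 0 ∧ y ≠ 0 ∧ 0 ∉ t := by simpa [eq_comm] using hc
  rw [Multiset.lcm_cons, Multiset.lcm_cons, ← lcm_assoc, Multiset.sum_cons, Multiset.sum_cons,
    lcm_eq_nat_lcm, lcm_eq_nat_lcm]
  calc 2 + primePowerSum ((x.lcm y).lcm t.lcm)
      ≤ 2 + (primePowerSum (x.lcm y) + primePowerSum t.lcm) := by
        gcongr
        exact primePowerSum_lcm_le (Nat.lcm_ne_zero hx0 hy0) (mt (Multiset.lcm_eq_zero_iff t).1 ht)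
    _ ≤ x + (y + t.sum) := by
        have := primePowerSum_lcm_add_two_le hx hy hx0 hy0
        have := primePowerSum_lcm_le_sum ht
        omega

def primePowers (m : ℕ) : Multiset ℕ := m.primeFactors.val.map fun p => p ^ m.factorization p

theorem two_le_of_mem_primePowers {m x : ℕ} (hx : x ∈ primePowers m) : 2 ≤ x := by
  obtain ⟨p, hp, rfl⟩ := Multiset.mem_map.1 hx
  exact (Nat.prime_of_mem_primeFactors hp).two_le.trans
    (Nat.le_self_pow (Finsupp.mem_support_iff.1 hp) p)

theorem lcm_primePowers {m : ℕ} (hm : m ≠ 0) : (primePowers m).lcm = m := by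
  rw [primePowers, ← Finset.lcm_def, Finset.lcm_eq_prod,
    ← Nat.prod_primeFactors_pow_factorization hm]
  intro p hp q hq hpq
  exact Nat.Coprime.pow _ _ ((Nat.coprime_primes (Nat.prime_of_mem_primeFactors hp)
    (Nat.prime_of_mem_primeFactors hq)).2 hpq)

theorem card_filter_even_primePowers {m : ℕ} (hm : m ≠ 0) :
    Multiset.card ((primePowers m).filter Even) = if Even m then 1 else 0 := by
  have hfilter : m.primeFactors.filter (Even ∘ fun p => p ^ m.factorization p) =
      m.primeFactors.filter (· = 2) := Finset.filter_congr fun p hp => by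
    rw [Function.comp_apply, Nat.even_pow, (Nat.prime_of_mem_primeFactors hp).even_iff,
      and_iff_left (Finsupp.mem_support_iff.1 hp)]
  rw [primePowers, Multiset.filter_map, Multiset.card_map, ← Finset.filter_val, ← Finset.card_def,
    hfilter, Finset.filter_eq']
  by_cases h : Even m <;>
    simp [h, Nat.mem_primeFactors_of_ne_zero hm, Nat.prime_two, ← even_iff_two_dvd]

theorem stmt_13 (n a : ℕ) (ha : 0 < a) :
    (Odd a →
      ((∃ g : alternatingGroup (Fin n), orderOf g = a) ↔
        ∑ p ∈ a.primeFactors, p ^ (a.factorization p) ≤ n)) ∧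
    (Even a →
      ((∃ g : alternatingGroup (Fin n), orderOf g = a) ↔
        2 + ∑ p ∈ a.primeFactors, p ^ (a.factorization p) ≤ n)) := by
  have ha0 : a ≠ 0 := ha.ne'
  have hc0 : ∀ c : Multiset ℕ, (∀ x ∈ c, 2 ≤ x) → 0 ∉ c := fun c hc h0 => by
    have := hc 0 h0; omega
  rw [show ∑ p ∈ a.primeFactors, p ^ a.factorization p = primePowerSum a from rfl]
  simp only [exists_orderOf_alternatingGroup_iff, Fintype.card_fin]
  refine ⟨fun hodd => ⟨?_, fun h => ?_⟩, fun heven => ⟨?_, fun h => ?_⟩⟩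
  · rintro ⟨c, hc2, hcn, -, rfl⟩
    exact (primePowerSum_lcm_le_sum (hc0 c hc2)).trans hcn
  · refine ⟨primePowers a, fun x => two_le_of_mem_primePowers, h, ?_, lcm_primePowers ha0⟩
    rw [card_filter_even_primePowers ha0, if_neg (Nat.not_even_iff_odd.2 hodd)]
    exact Even.zero
  · rintro ⟨c, hc2, hcn, hceven, rfl⟩
    exact (two_add_primePowerSum_lcm_le_sum (hc0 c hc2) heven hceven).trans hcn
  · refine ⟨2 ::ₘ primePowers a, Multiset.forall_mem_cons.2
      ⟨le_rfl, fun x => two_le_of_mem_primePowers⟩, by rw [Multiset.sum_cons]; exact h, ?_, ?_⟩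
    · rw [Multiset.filter_cons_of_pos _ even_two, Multiset.card_cons,
        card_filter_even_primePowers ha0, if_pos heven]
      exact even_two
    · rw [Multiset.lcm_cons, lcm_primePowers ha0, lcm_eq_nat_lcm, Nat.lcm_eq_right heven.two_dvd]
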